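/- Let C be a category and I = (ι_i)_{i∈I} an indexed family of morphisms of C, and suppose the codomain functor cod : ATF(C;I) → C has a left adjoint right inverse (a left adjoint with identity unit), whose value at X ∈ C is the algebraic trivial fibration (ε_X : QX → X, κ̄_X). Define δ_X : QX → Q²X as the unique morphism such that (δ_X, 1_X) is a morphism of algebraic trivial fibrations from (ε_X, κ̄_X) to (ε_X ∘ ε_{QX}, λ̄_X), where λ̄_X(i; u, v) = κ̄_{QX}(i; u, κ̄_X(i; ε_{QX}∘u, v)), and for each morphism f : X → Y of C define Qf : QX → QY as the unique morphism such that (Qf, f) is a morphism of algebraic trivial fibrations from (ε_X, κ̄_X) to (ε_Y, κ̄_Y). Then Q is a functor, ε and δ are natural transformations, and (Q, ε, δ) is a comonad on C. -/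
import Mathlib


/-!
Algebraic trivial fibrations and the cofibrant replacement comonad.

Given a category `C` and a family `I = (ι_i)` of morphisms of `C`, an
*algebraic trivial fibration* is a morphism equipped with a chosen lifting
operation against every `ι_i`; a morphism of algebraic trivial fibrations is
a commutative square commuting with the chosen lifts.  Assuming the codomain
functor from algebraic trivial fibrations to `C` admits a left adjoint right
inverse `X ↦ (ε_X : Q X → X, κ̄_X)`, and defining `Q f` and `δ_X` by the
universal property (as the unique morphisms making the relevant squares into
morphisms of algebraic trivial fibrations), one obtains a comonad `(Q, ε, δ)`.
-/

open CategoryTheory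

universe w v u

variable {C : Type u} [Category.{v} C]

/-- A chosen lifting operation on `g` against the family `I i : A i ⟶ B i`:
for every commutative square `(u, v) : I i → g` a chosen diagonal filler. -/
def LiftingOp {ι : Type w} {A B : ι → C} (I : ∀ i, A i ⟶ B i) {X Y : C} (g : X ⟶ Y) :
    Type max w v :=
  ∀ (i : ι) (u : A i ⟶ X) (v : B i ⟶ Y), u ≫ g = I i ≫ v →
    { l : B i ⟶ X // I i ≫ l = u ∧ l ≫ g = v }

/-- `(h, k)` is a morphism of algebraic trivial fibrations from `(f, κ)` to
`(g, lam)`: the square `f ≫ k = h ≫ g` commutes and `h` carries the chosen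
lifts of `(f, κ)` to the chosen lifts of `(g, lam)`. -/
def IsATFHom {ι : Type w} {A B : ι → C} (I : ∀ i, A i ⟶ B i)
    {X Y Z W : C} {f : X ⟶ Y} {g : Z ⟶ W}
    (κ : LiftingOp I f) (lam : LiftingOp I g) (h : X ⟶ Z) (k : Y ⟶ W) : Prop :=
  f ≫ k = h ≫ g ∧
  ∀ (i : ι) (u : A i ⟶ X) (v : B i ⟶ Y) (sq : u ≫ f = I i ≫ v)
    (sq' : (u ≫ h) ≫ g = I i ≫ (v ≫ k)),
    (κ i u v sq).1 ≫ h = (lam i (u ≫ h) (v ≫ k) sq').1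

/-- The canonical lifting operation `λ̄` on a composite `f ≫ g` of morphisms
carrying lifting operations, given by `λ̄(i; u, v) = κf(i; u, κg(i; f∘u, v))`. -/
def LiftingOp.comp {ι : Type w} {A B : ι → C} {I : ∀ i, A i ⟶ B i}
    {X Y Z : C} {f : X ⟶ Y} {g : Y ⟶ Z}
    (κf : LiftingOp I f) (κg : LiftingOp I g) : LiftingOp I (f ≫ g) := fun i u v sq =>
  let m := κg i (u ≫ f) v (by rw [Category.assoc]; exact sq)
  let l := κf i u m.1 m.2.1.symm
  ⟨l.1, l.2.1, by rw [← Category.assoc, l.2.2, m.2.2]⟩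

section Aux

variable {ι : Type w} {A B : ι → C} {I : ∀ i, A i ⟶ B i}

lemma lift_congr {X Y : C} {f : X ⟶ Y} (κ : LiftingOp I f) (i : ι)
    {u u' : A i ⟶ X} {v v' : B i ⟶ Y} (hu : u = u') (hv : v = v')
    (sq : u ≫ f = I i ≫ v) (sq' : u' ≫ f = I i ≫ v') :
    (κ i u v sq).1 = (κ i u' v' sq').1 := by subst hu; subst hv; rfl

lemma IsATFHom.id {X Y : C} {f : X ⟶ Y} (κ : LiftingOp I f) :
    IsATFHom I κ κ (𝟙 X) (𝟙 Y) := by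
  refine ⟨by simp, fun i u v sq sq' => ?_⟩
  simp only [Category.comp_id]
  exact lift_congr κ i (by simp) (by simp) _ _

lemma IsATFHom.comp {X Y Z W X' Y' : C} {f : X ⟶ Y} {g : Z ⟶ W} {e : X' ⟶ Y'}
    {κ₁ : LiftingOp I f} {κ₂ : LiftingOp I g} {κ₃ : LiftingOp I e}
    {h : X ⟶ Z} {k : Y ⟶ W} {h' : Z ⟶ X'} {k' : W ⟶ Y'}
    (H₁ : IsATFHom I κ₁ κ₂ h k) (H₂ : IsATFHom I κ₂ κ₃ h' k') :
    IsATFHom I κ₁ κ₃ (h ≫ h') (k ≫ k') := by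
  refine ⟨by rw [← Category.assoc, H₁.1, Category.assoc, H₂.1, Category.assoc], ?_⟩
  intro i u v sq sq'
  have sq₂ : (u ≫ h) ≫ g = I i ≫ (v ≫ k) := by
    rw [Category.assoc, ← H₁.1, ← Category.assoc, sq, Category.assoc]
  have sq₃ : ((u ≫ h) ≫ h') ≫ e = I i ≫ ((v ≫ k) ≫ k') := by
    rw [Category.assoc, ← H₂.1, ← Category.assoc, sq₂, Category.assoc]
  rw [← Category.assoc, H₁.2 i u v sq sq₂, H₂.2 i (u ≫ h) (v ≫ k) sq₂ sq₃]
  exact lift_congr κ₃ i (by simp) (by simp) _ _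

/-- Pairing of ATF morphisms along composites. -/
lemma IsATFHom.pair {X Y Z X' Y' Z' : C}
    {f : X ⟶ Y} {g : Y ⟶ Z} {f' : X' ⟶ Y'} {g' : Y' ⟶ Z'}
    {κf : LiftingOp I f} {κg : LiftingOp I g}
    {κf' : LiftingOp I f'} {κg' : LiftingOp I g'}
    {h : X ⟶ X'} {k : Y ⟶ Y'} {l : Z ⟶ Z'}
    (H₁ : IsATFHom I κf κf' h k) (H₂ : IsATFHom I κg κg' k l) :
    IsATFHom I (κf.comp κg) (κf'.comp κg') h l := by
  refine ⟨by rw [Category.assoc, H₂.1, ← Category.assoc, H₁.1, Category.assoc], ?_⟩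
  intro i u v sq sq'
  dsimp only [LiftingOp.comp]
  have sqm : (u ≫ f) ≫ g = I i ≫ v := by rw [Category.assoc]; exact sq
  set m := κg i (u ≫ f) v sqm with hm
  have sqm' : ((u ≫ f) ≫ k) ≫ g' = I i ≫ (v ≫ l) := by
    conv_lhs => rw [Category.assoc, ← H₂.1, ← Category.assoc, sqm, Category.assoc]
  have sq₁ : u ≫ f = I i ≫ m.1 := m.2.1.symm
  have sq₁' : (u ≫ h) ≫ f' = I i ≫ (m.1 ≫ k) := by
    conv_lhs => rw [Category.assoc, ← H₁.1, ← Category.assoc, sq₁, Category.assoc]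
  rw [H₁.2 i u m.1 sq₁ sq₁']
  refine lift_congr κf' i rfl ?_ _ _
  rw [H₂.2 i (u ≫ f) v sqm sqm']
  exact lift_congr κg' i (by rw [Category.assoc, H₁.1, Category.assoc]) rfl _ _

/-- Associativity of `LiftingOp.comp`, as an ATF morphism with identity components. -/
lemma IsATFHom.assocOp {X Y Z W : C} {g₁ : X ⟶ Y} {g₂ : Y ⟶ Z} {g₃ : Z ⟶ W}
    (κ₁ : LiftingOp I g₁) (κ₂ : LiftingOp I g₂) (κ₃ : LiftingOp I g₃) :
    IsATFHom I ((κ₁.comp κ₂).comp κ₃) (κ₁.comp (κ₂.comp κ₃)) (𝟙 X) (𝟙 W) := by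
  refine ⟨by simp, fun i u v sq sq' => ?_⟩
  dsimp only [LiftingOp.comp]
  simp only [Category.comp_id]
  refine lift_congr κ₁ i (by simp) ?_ _ _
  refine lift_congr κ₂ i (by simp) ?_ _ _
  exact lift_congr κ₃ i (by simp) (by simp) _ _

end Aux

/-- **The cofibrant replacement comonad.**
Let `C` be a category and `I` an indexed family of morphisms of `C`.  Suppose
the codomain functor `cod : ATF(C; I) → C` has a left adjoint right inverse,
with value `(ε_X : Q X → X, κ X)` at `X` (this is the hypothesis `lari`:
for every algebraic trivial fibration `(g, lam)` over `W` and every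
`k : X ⟶ W` there is a unique `h : Q X ⟶ Z` such that `(h, k)` is a morphism
of algebraic trivial fibrations).  Let `Qm f : Q X ⟶ Q Y` be the unique
morphism such that `(Qm f, f)` is a morphism of algebraic trivial fibrations
`(ε_X, κ X) → (ε_Y, κ Y)`, and let `δ X : Q X ⟶ Q (Q X)` be the unique
morphism such that `(δ X, 𝟙 X)` is a morphism of algebraic trivial fibrations
`(ε_X, κ X) → (ε_{QX} ≫ ε_X, λ̄_X)` where `λ̄_X` is the canonical lifting
operation on the composite.  Then `Q` is a functor, `ε` and `δ` are natural
transformations, and `(Q, ε, δ)` is a comonad on `C`. -/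
theorem cofibrant_replacement_comonad
    {C : Type u} [Category.{v} C] {ι : Type w} {A B : ι → C} (I : ∀ i, A i ⟶ B i)
    (Q : C → C) (ε : ∀ X : C, Q X ⟶ X) (κ : ∀ X : C, LiftingOp I (ε X))
    (lari : ∀ {Z W : C} (g : Z ⟶ W) (lam : LiftingOp I g) (X : C) (k : X ⟶ W),
      ∃! h : Q X ⟶ Z, IsATFHom I (κ X) lam h k)
    (Qm : ∀ {X Y : C}, (X ⟶ Y) → (Q X ⟶ Q Y))
    (hQm : ∀ {X Y : C} (f : X ⟶ Y), IsATFHom I (κ X) (κ Y) (Qm f) f)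
    (δ : ∀ X : C, Q X ⟶ Q (Q X))
    (hδ : ∀ X : C, IsATFHom I (κ X) ((κ (Q X)).comp (κ X)) (δ X) (𝟙 X)) :
    -- `Q` is functorial:
    (∀ X : C, Qm (𝟙 X) = 𝟙 (Q X)) ∧
    (∀ {X Y Z : C} (f : X ⟶ Y) (g : Y ⟶ Z), Qm (f ≫ g) = Qm f ≫ Qm g) ∧
    -- `ε` and `δ` are natural:
    (∀ {X Y : C} (f : X ⟶ Y), Qm f ≫ ε Y = ε X ≫ f) ∧
    (∀ {X Y : C} (f : X ⟶ Y), Qm f ≫ δ Y = δ X ≫ Qm (Qm f)) ∧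
    -- the comonad laws for `(Q, ε, δ)`:
    (∀ X : C, δ X ≫ ε (Q X) = 𝟙 (Q X)) ∧
    (∀ X : C, δ X ≫ Qm (ε X) = 𝟙 (Q X)) ∧
    (∀ X : C, δ X ≫ δ (Q X) = δ X ≫ Qm (δ X)) := by
  -- Functoriality: identities
  have hid : ∀ X : C, Qm (𝟙 X) = 𝟙 (Q X) := fun X =>
    (lari (ε X) (κ X) X (𝟙 X)).unique (hQm (𝟙 X)) (IsATFHom.id (κ X))
  -- Functoriality: composition
  have hcomp : ∀ {X Y Z : C} (f : X ⟶ Y) (g : Y ⟶ Z), Qm (f ≫ g) = Qm f ≫ Qm g := by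
    intro X Y Z f g
    exact (lari (ε Z) (κ Z) X (f ≫ g)).unique (hQm (f ≫ g)) ((hQm f).comp (hQm g))
  -- Naturality of ε
  have hεnat : ∀ {X Y : C} (f : X ⟶ Y), Qm f ≫ ε Y = ε X ≫ f := fun f => (hQm f).1.symm
  -- Naturality of δ
  have hδnat : ∀ {X Y : C} (f : X ⟶ Y), Qm f ≫ δ Y = δ X ≫ Qm (Qm f) := by
    intro X Y f
    have h₁ : IsATFHom I (κ X) ((κ (Q Y)).comp (κ Y)) (Qm f ≫ δ Y) f := by
      simpa using (hQm f).comp (hδ Y)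
    have h₂ : IsATFHom I (κ X) ((κ (Q Y)).comp (κ Y)) (δ X ≫ Qm (Qm f)) f := by
      simpa using (hδ X).comp ((hQm (Qm f)).pair (hQm f))
    exact ((lari (ε (Q Y) ≫ ε Y) ((κ (Q Y)).comp (κ Y)) X f).unique h₁ h₂)
  -- Counit law 1: δ ≫ ε Q = 1
  have hcounit₁ : ∀ X : C, δ X ≫ ε (Q X) = 𝟙 (Q X) := by
    intro X
    have hproj : IsATFHom I ((κ (Q X)).comp (κ X)) (κ X) (ε (Q X)) (𝟙 X) := by
      refine ⟨by simp, fun i u v sq sq' => ?_⟩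
      dsimp only [LiftingOp.comp]
      rw [(κ (Q X) i u _ _).2.2]
      exact lift_congr (κ X) i rfl (by simp) _ _
    have h₁ : IsATFHom I (κ X) (κ X) (δ X ≫ ε (Q X)) (𝟙 X) := by
      simpa using (hδ X).comp hproj
    exact (lari (ε X) (κ X) X (𝟙 X)).unique h₁ (IsATFHom.id (κ X))
  -- Counit law 2: δ ≫ Q ε = 1
  have hcounit₂ : ∀ X : C, δ X ≫ Qm (ε X) = 𝟙 (Q X) := by
    intro X
    have h₁ : IsATFHom I (κ X) (κ X) (δ X ≫ Qm (ε X)) (𝟙 X) := by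
      constructor
      · have e₁ := (hδ X).1
        have e₂ := (hQm (ε X)).1
        rw [Category.assoc, ← e₂, ← e₁]
      · intro i u v sq sq'
        have sqc : (u ≫ δ X) ≫ (ε (Q X) ≫ ε X) = I i ≫ (v ≫ 𝟙 X) := by
          rw [Category.assoc, ← (hδ X).1, ← Category.assoc, sq, Category.assoc]
        rw [← Category.assoc, (hδ X).2 i u v sq sqc]
        dsimp only [LiftingOp.comp]
        set m := κ X i ((u ≫ δ X) ≫ ε (Q X)) (v ≫ 𝟙 X)
          (by rw [Category.assoc]; exact sqc) with hm
        have sqk : ((u ≫ δ X) ≫ Qm (ε X)) ≫ ε X = I i ≫ (m.1 ≫ ε X) := by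
          conv_lhs => rw [Category.assoc, ← (hQm (ε X)).1, ← Category.assoc, ← m.2.1,
            Category.assoc]
        rw [(hQm (ε X)).2 i (u ≫ δ X) m.1 m.2.1.symm sqk]
        refine lift_congr (κ X) i (by simp) ?_ _ _
        rw [m.2.2]
    exact (lari (ε X) (κ X) X (𝟙 X)).unique h₁ (IsATFHom.id (κ X))
  -- Coassociativity
  have hcoassoc : ∀ X : C, δ X ≫ δ (Q X) = δ X ≫ Qm (δ X) := by
    intro X
    set lam := (κ (Q (Q X))).comp ((κ (Q X)).comp (κ X)) with hlam
    have h₁ : IsATFHom I (κ X) lam (δ X ≫ δ (Q X)) (𝟙 X) := by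
      have a : IsATFHom I ((κ (Q X)).comp (κ X))
          (((κ (Q (Q X))).comp (κ (Q X))).comp (κ X)) (δ (Q X)) (𝟙 X) :=
        (hδ (Q X)).pair (IsATFHom.id (κ X))
      have b := ((hδ X).comp a).comp (IsATFHom.assocOp (κ (Q (Q X))) (κ (Q X)) (κ X))
      simpa using b
    have h₂ : IsATFHom I (κ X) lam (δ X ≫ Qm (δ X)) (𝟙 X) := by
      simpa using (hδ X).comp ((hQm (δ X)).pair (hδ X))
    exact (lari (ε (Q (Q X)) ≫ (ε (Q X) ≫ ε X)) lam X (𝟙 X)).unique h₁ h₂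
  exact ⟨hid, @hcomp, @hεnat, @hδnat, hcounit₁, hcounit₂, hcoassoc⟩
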